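/- arXiv:1104.0194 — 11 statements merged into one kernel-verified Lean document; each statement's English description precedes it below -/
import Mathlib

section
/- Let G be a finite abelian group and let A, B be nonempty subsets of G with |A| + |B| = |G|. Then either A + B = G, or there exists a subgroup H of G and an element a ∈ G such that A + H = A, B + H = B, and A + B = G \ (a + H). -/
/-!
An element `x` misses `A + B` exactly when `A` and the translate `x +ᵥ -B` are disjoint; since
`|A| + |B| = |G|` this forces `x +ᵥ -B = Aᶜ`. Two such elements `x` and `c` therefore differ by an
element stabilizing `Aᶜ`, hence `A`, so the complement of `A + B` is a single coset of the
stabilizer of `A`. By symmetry it is also a coset of the stabilizer of `B`, so the two stabilizers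
coincide, and `A` and `B` are both periodic with respect to it.
-/

open Pointwise

namespace Set

variable {G : Type*} [AddGroup G] [Finite G] {A B : Set G}

theorem notMem_add_iff_vadd_neg_eq_compl (hcard : A.ncard + B.ncard = Nat.card G) {x : G} :
    x ∉ A + B ↔ x +ᵥ -B = Aᶜ := by
  have mem_translate {a : G} : a ∈ x +ᵥ -B ↔ -a + x ∈ B := by
    rw [mem_vadd_set_iff_neg_vadd_mem, mem_neg, vadd_eq_add, neg_add_rev, neg_neg]
  constructor
  · intro hx
    have hsub : x +ᵥ -B ⊆ Aᶜ := fun a ha haA =>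
      hx ⟨a, haA, -a + x, mem_translate.mp ha, add_neg_cancel_left a x⟩
    refine eq_of_subset_of_ncard_le hsub ?_
    have hcompl := ncard_add_ncard_compl A
    rw [ncard_vadd_set, ncard_neg]
    omega
  · rintro hx ⟨a, ha, b, hb, rfl⟩
    have : a ∈ (a + b) +ᵥ -B := mem_translate.mpr (by rwa [neg_add_cancel_left])
    exact (hx ▸ this) ha

theorem compl_add_eq_stabilizer_add_singleton (hcard : A.ncard + B.ncard = Nat.card G) {c : G}
    (hc : c ∉ A + B) : (A + B)ᶜ = (AddAction.stabilizer G A : Set G) + {c} := by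
  have hAc := (notMem_add_iff_vadd_neg_eq_compl hcard).mp hc
  ext x
  have hshift : (x - c) +ᵥ Aᶜ = x +ᵥ -B := by rw [← hAc, vadd_vadd, sub_add_cancel]
  rw [mem_compl_iff, notMem_add_iff_vadd_neg_eq_compl hcard, add_singleton, image_add_right,
    mem_preimage, ← sub_eq_add_neg, SetLike.mem_coe, AddAction.mem_stabilizer_iff, ← hshift,
    vadd_set_compl, compl_inj_iff]

end Set

theorem sumset_structure_of_card_add_card_eq_general {G : Type*} [AddCommGroup G] [Fintype G]
    (A B : Set G)
    (h : A.ncard + B.ncard = Fintype.card G) :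
    A + B = Set.univ ∨
      ∃ (H : AddSubgroup G) (a : G),
        A + (H : Set G) = A ∧ B + (H : Set G) = B ∧
        A + B = Set.univ \ ({a} + (H : Set G)) := by
  rw [← Nat.card_eq_fintype_card] at h
  by_cases hAB : A + B = Set.univ
  · exact Or.inl hAB
  obtain ⟨c, hc⟩ := (Set.ne_univ_iff_exists_notMem _).mp hAB
  have hcoset_A := Set.compl_add_eq_stabilizer_add_singleton h hc
  have hcoset_B := Set.compl_add_eq_stabilizer_add_singleton (A := B) (B := A) (by omega)
    (by rwa [add_comm])
  have hstab : (AddAction.stabilizer G A : Set G) = AddAction.stabilizer G B := by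
    rw [add_comm B A, hcoset_A, Set.add_singleton, Set.add_singleton] at hcoset_B
    exact Set.image_injective.mpr (add_left_injective c) hcoset_B
  refine Or.inr ⟨AddAction.stabilizer G A, c, AddAction.add_stabilizer_self A,
    hstab ▸ AddAction.add_stabilizer_self B, ?_⟩
  rw [← Set.compl_eq_univ_sdiff, add_comm ({c} : Set G), ← hcoset_A, compl_compl]

theorem sumset_structure_of_card_add_card_eq {G : Type*} [AddCommGroup G] [Fintype G]
    (A B : Set G) (hA : A.Nonempty) (hB : B.Nonempty)
    (h : A.ncard + B.ncard = Fintype.card G) :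
    A + B = Set.univ ∨
      ∃ (H : AddSubgroup G) (a : G),
        A + (H : Set G) = A ∧ B + (H : Set G) = B ∧
        A + B = Set.univ \ ({a} + (H : Set G)) :=
  sumset_structure_of_card_add_card_eq_general A B h
end

section
/- Let G be a finite abelian group of odd order with a 3-coloring of its elements having color classes A, B, C which contains no rainbow 3-term arithmetic progression (no triple (x,y,z) with x + z = 2y whose members have pairwise distinct colors). Then for any two distinct color classes X, Y ∈ {A, B, C}, |X + Y| ≤ |X| + |Y|. -/
/-!
As `|G|` is odd, doubling is a bijection of `G`, so every `x + z` with `x ∈ X`, `z ∈ Y` equals `2 • y`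
for a midpoint `y`. Rainbow-freeness keeps `y` out of the third class, hence `X + Y ⊆ 2 • (X ∪ Y)`,
a set of at most `|X| + |Y|` elements.
-/

open Pointwise

/-- A 3-coloring with classes `A`, `B`, `C` is rainbow-free if no 3-term
arithmetic progression `(x, y, z)` (i.e. `x + z = 2 • y`) has its members in
three pairwise distinct color classes. -/
def RainbowFree {G : Type*} [AddCommGroup G] (A B C : Set G) : Prop :=
  ∀ x y z : G, x + z = 2 • y →
    ¬ ((x ∈ A ∧ y ∈ B ∧ z ∈ C) ∨ (x ∈ A ∧ y ∈ C ∧ z ∈ B) ∨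
       (x ∈ B ∧ y ∈ A ∧ z ∈ C) ∨ (x ∈ B ∧ y ∈ C ∧ z ∈ A) ∨
       (x ∈ C ∧ y ∈ A ∧ z ∈ B) ∨ (x ∈ C ∧ y ∈ B ∧ z ∈ A))

theorem Set.add_subset_image_two_nsmul {G : Type*} [AddMonoid G]
    (hsurj : Function.Surjective fun g : G => 2 • g) {X Y : Set G}
    (hmid : ∀ x y z : G, x + z = 2 • y → x ∈ X → z ∈ Y → y ∈ X ∪ Y) :
    X + Y ⊆ (fun g : G => 2 • g) '' (X ∪ Y) := by
  rintro _ ⟨x, hx, z, hz, rfl⟩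
  obtain ⟨y, hy⟩ := hsurj (x + z)
  exact ⟨y, hmid x y z hy.symm hx hz, hy⟩

theorem Set.ncard_add_le_of_midpoint_mem {G : Type*} [AddMonoid G] [Finite G]
    (hsurj : Function.Surjective fun g : G => 2 • g) {X Y : Set G}
    (hmid : ∀ x y z : G, x + z = 2 • y → x ∈ X → z ∈ Y → y ∈ X ∪ Y) :
    (X + Y).ncard ≤ X.ncard + Y.ncard :=
  calc (X + Y).ncard ≤ ((fun g : G => 2 • g) '' (X ∪ Y)).ncard :=
        Set.ncard_le_ncard (Set.add_subset_image_two_nsmul hsurj hmid)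
    _ ≤ (X ∪ Y).ncard := Set.ncard_image_le (Set.toFinite _)
    _ ≤ X.ncard + Y.ncard := Set.ncard_union_le X Y

theorem RainbowFree.mem_union_of_add_eq_two_nsmul {G : Type*} [AddCommGroup G] {A B C : Set G}
    (hrf : RainbowFree A B C) (hcover : A ∪ B ∪ C = Set.univ) {X Y : Set G}
    (hX : X ∈ ({A, B, C} : Set (Set G))) (hY : Y ∈ ({A, B, C} : Set (Set G))) (hne : X ≠ Y)
    {x y z : G} (hxz : x + z = 2 • y) (hx : x ∈ X) (hz : z ∈ Y) : y ∈ X ∪ Y := by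
  have hy : y ∈ A ∪ B ∪ C := hcover ▸ Set.mem_univ y
  have hnot := hrf x y z hxz
  simp only [Set.mem_insert_iff, Set.mem_singleton_iff] at hX hY
  rcases hX with rfl | rfl | rfl <;> rcases hY with rfl | rfl | rfl <;>
    first
    | exact absurd rfl hne
    | rcases hy with (hy | hy) | hy <;>
        first
        | exact Or.inl hy
        | exact Or.inr hy
        | exact (hnot (by simp [hx, hy, hz])).elim

theorem sumset_small_of_rainbowFree_general {G : Type*} [AddCommGroup G] [Fintype G]
    (hodd : Odd (Fintype.card G)) (A B C : Set G)
    (hcover : A ∪ B ∪ C = Set.univ)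
    (hrf : RainbowFree A B C) :
    ∀ X Y : Set G, X ∈ ({A, B, C} : Set (Set G)) → Y ∈ ({A, B, C} : Set (Set G)) →
      X ≠ Y → (X + Y).ncard ≤ X.ncard + Y.ncard := by
  have hsurj : Function.Surjective fun g : G => 2 • g :=
    (Nat.Coprime.nsmul_right_bijective (by rwa [Nat.card_eq_fintype_card, Nat.coprime_two_right])).2
  intro X Y hX hY hne
  exact Set.ncard_add_le_of_midpoint_mem hsurj fun x y z hxz hx hz =>
    hrf.mem_union_of_add_eq_two_nsmul hcover hX hY hne hxz hx hz

theorem sumset_small_of_rainbowFree {G : Type*} [AddCommGroup G] [Fintype G]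
    (hodd : Odd (Fintype.card G)) (A B C : Set G)
    (hcover : A ∪ B ∪ C = Set.univ)
    (hAB : Disjoint A B) (hAC : Disjoint A C) (hBC : Disjoint B C)
    (hrf : RainbowFree A B C) :
    ∀ X Y : Set G, X ∈ ({A, B, C} : Set (Set G)) → Y ∈ ({A, B, C} : Set (Set G)) →
      X ≠ Y → (X + Y).ncard ≤ X.ncard + Y.ncard :=
  sumset_small_of_rainbowFree_general hodd A B C hcover hrf
end

section
/- Let G be a finite abelian group of odd order with a rainbow-free 3-coloring with color classes A, B, C. Let H be a subgroup of G and let X, Y, Z be H-cosets with X + Y = 2·Z (as cosets, i.e., their images in G/H satisfy x̄ + ȳ = 2z̄). If X ∩ A, Y ∩ B, and Z ∩ C are all nonempty, then |X ∩ A| + |Y ∩ B| ≤ |H|, |X ∩ A| + |Z ∩ C| ≤ |H|, and |Y ∩ B| + |Z ∩ C| ≤ |H|. -/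
/-!
Reflecting `X ∩ A` through a point of `Z ∩ C` sends it injectively into `Y \ B`, by
rainbow-freeness; halving the sum with a fixed point of `Y ∩ B` (resp. `X ∩ A`) sends `X ∩ A`
(resp. `Y ∩ B`) injectively into `Z \ C`. Halving exists and respects cosets because `G` and
`G ⧸ H` have odd order. An injection of `X ∩ A` into `Y \ B` gives
`|X ∩ A| + |Y ∩ B| ≤ |Y| = |H|`, and likewise for the other two pairs.
-/

open Pointwise

open Function Set

theorem Set.ncard_add_ncard_inter_le_of_mapsTo_sdiff {α β : Type*} {s : Set α} {t u : Set β}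
    {f : α → β} (hu : u.Finite) (hf : MapsTo f s (u \ t)) (hinj : InjOn f s) :
    s.ncard + (u ∩ t).ncard ≤ u.ncard := by
  have := ncard_le_ncard_of_injOn f hf hinj hu.sdiff
  rw [← ncard_inter_add_ncard_sdiff_eq_ncard u t hu]
  omega

theorem two_nsmul_bijective_of_odd_card {G : Type*} [AddGroup G] (h : Odd (Nat.card G)) :
    Bijective fun g : G => 2 • g :=
  Nat.Coprime.nsmul_right_bijective (Nat.coprime_two_right.2 h)

namespace RainbowFree

variable {G : Type*} [AddCommGroup G] {A B C : Set G} {a b c m : G}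

theorem two_nsmul_sub_notMem (hrf : RainbowFree A B C) (ha : a ∈ A) (hc : c ∈ C) :
    2 • c - a ∉ B :=
  fun hb => hrf a c _ (by abel) (Or.inr (Or.inl ⟨ha, hc, hb⟩))

theorem notMem_of_two_nsmul_eq_add (hrf : RainbowFree A B C) (ha : a ∈ A) (hb : b ∈ B)
    (hm : 2 • m = a + b) : m ∉ C :=
  fun hmC => hrf a m b hm.symm (Or.inr (Or.inl ⟨ha, hmC, hb⟩))

end RainbowFree

namespace AddSubgroup

variable {G : Type*} [AddCommGroup G] {H : AddSubgroup G} {a b c m x y z : G}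

theorem mem_singleton_add_iff {g : G} : g ∈ {x} + (H : Set G) ↔ (g : G ⧸ H) = x := by
  rw [singleton_add, eq_comm, QuotientAddGroup.eq]
  simp

theorem ncard_singleton_add (x : G) : ({x} + (H : Set G)).ncard = Nat.card H := by
  rw [singleton_add, ncard_image_of_injective _ (add_right_injective x), ← Nat.card_coe_set_eq]
  rfl

theorem ncard_add_ncard_singleton_add_inter_le [Finite G] {s t : Set G} {f : G → G}
    (hf : MapsTo f s (({y} + (H : Set G)) \ t)) (hinj : InjOn f s) :
    s.ncard + (({y} + (H : Set G)) ∩ t).ncard ≤ Nat.card H :=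
  ncard_singleton_add (H := H) y ▸ ncard_add_ncard_inter_le_of_mapsTo_sdiff (toFinite _) hf hinj

theorem two_nsmul_sub_mem_singleton_add (hap : (x : G ⧸ H) + y = 2 • (z : G ⧸ H))
    (ha : a ∈ {x} + (H : Set G)) (hc : c ∈ {z} + (H : Set G)) :
    2 • c - a ∈ {y} + (H : Set G) := by
  rw [mem_singleton_add_iff] at *
  rw [QuotientAddGroup.mk_sub, QuotientAddGroup.mk_nsmul, ha, hc, ← hap]
  abel

theorem mem_singleton_add_of_two_nsmul_eq_add (hodd : Odd (Nat.card (G ⧸ H)))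
    (hap : (x : G ⧸ H) + y = 2 • (z : G ⧸ H))
    (ha : a ∈ {x} + (H : Set G)) (hb : b ∈ {y} + (H : Set G)) (hm : 2 • m = a + b) :
    m ∈ {z} + (H : Set G) := by
  rw [mem_singleton_add_iff] at *
  apply (two_nsmul_bijective_of_odd_card hodd).injective
  simp only [← hap, ← ha, ← hb, ← QuotientAddGroup.mk_nsmul, hm, QuotientAddGroup.mk_add]

end AddSubgroup

theorem three_cosets_lemma_general {G : Type*} [AddCommGroup G] [Fintype G]
    (hodd : Odd (Fintype.card G)) (A B C : Set G)
    (hrf : RainbowFree A B C)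
    (H : AddSubgroup G) (x y z : G)
    (hap : x + y - 2 • z ∈ H)
    (hXA : (({x} + (H : Set G)) ∩ A).Nonempty)
    (hYB : (({y} + (H : Set G)) ∩ B).Nonempty)
    (hZC : (({z} + (H : Set G)) ∩ C).Nonempty) :
    (({x} + (H : Set G)) ∩ A).ncard + (({y} + (H : Set G)) ∩ B).ncard ≤ Nat.card H ∧
    (({x} + (H : Set G)) ∩ A).ncard + (({z} + (H : Set G)) ∩ C).ncard ≤ Nat.card H ∧
    (({y} + (H : Set G)) ∩ B).ncard + (({z} + (H : Set G)) ∩ C).ncard ≤ Nat.card H := by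
  rw [← Nat.card_eq_fintype_card] at hodd
  obtain ⟨a, haX, haA⟩ := hXA
  obtain ⟨b, hbY, hbB⟩ := hYB
  obtain ⟨c, hcZ, hcC⟩ := hZC
  have hap_quot : (x : G ⧸ H) + y = 2 • (z : G ⧸ H) := by
    exact_mod_cast QuotientAddGroup.eq_iff_sub_mem.2 hap
  have hodd_quot : Odd (Nat.card (G ⧸ H)) := hodd.of_dvd_nat H.index_dvd_card
  have hhalf := (two_nsmul_bijective_of_odd_card hodd).surjective
  have midpoint_mapsTo {a b : G} (ha : a ∈ {x} + (H : Set G)) (haA : a ∈ A)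
      (hb : b ∈ {y} + (H : Set G)) (hbB : b ∈ B) :
      surjInv hhalf (a + b) ∈ ({z} + (H : Set G)) \ C :=
    have hm := surjInv_eq hhalf (a + b)
    ⟨AddSubgroup.mem_singleton_add_of_two_nsmul_eq_add hodd_quot hap_quot ha hb hm,
      hrf.notMem_of_two_nsmul_eq_add haA hbB hm⟩
  refine ⟨?_, ?_, ?_⟩
  · refine AddSubgroup.ncard_add_ncard_singleton_add_inter_le (f := (2 • c - ·))
      (fun a' ⟨ha', ha'A⟩ => ⟨AddSubgroup.two_nsmul_sub_mem_singleton_add hap_quot ha' hcZ,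
        hrf.two_nsmul_sub_notMem ha'A hcC⟩) ?_
    exact sub_right_injective.injOn
  · refine AddSubgroup.ncard_add_ncard_singleton_add_inter_le (f := (surjInv hhalf <| · + b))
      (fun a' ⟨ha', ha'A⟩ => midpoint_mapsTo ha' ha'A hbY hbB) ?_
    exact ((injective_surjInv hhalf).comp (add_left_injective b)).injOn
  · refine AddSubgroup.ncard_add_ncard_singleton_add_inter_le (f := (surjInv hhalf <| a + ·))
      (fun b' ⟨hb', hb'B⟩ => midpoint_mapsTo haX haA hb' hb'B) ?_
    exact ((injective_surjInv hhalf).comp (add_right_injective a)).injOn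

theorem three_cosets_lemma {G : Type*} [AddCommGroup G] [Fintype G]
    (hodd : Odd (Fintype.card G)) (A B C : Set G)
    (hcover : A ∪ B ∪ C = Set.univ)
    (hAB : Disjoint A B) (hAC : Disjoint A C) (hBC : Disjoint B C)
    (hrf : RainbowFree A B C)
    (H : AddSubgroup G) (x y z : G)
    (hap : x + y - 2 • z ∈ H)
    (hXA : (({x} + (H : Set G)) ∩ A).Nonempty)
    (hYB : (({y} + (H : Set G)) ∩ B).Nonempty)
    (hZC : (({z} + (H : Set G)) ∩ C).Nonempty) :
    (({x} + (H : Set G)) ∩ A).ncard + (({y} + (H : Set G)) ∩ B).ncard ≤ Nat.card H ∧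
    (({x} + (H : Set G)) ∩ A).ncard + (({z} + (H : Set G)) ∩ C).ncard ≤ Nat.card H ∧
    (({y} + (H : Set G)) ∩ B).ncard + (({z} + (H : Set G)) ∩ C).ncard ≤ Nat.card H :=
  three_cosets_lemma_general hodd A B C hrf H x y z hap hXA hYB hZC
end

section
/- Let G be a finite abelian group of odd order with a rainbow-free 3-coloring with color classes A, B, C, let H be a subgroup of G, and let X, Y, Z be H-cosets in arithmetic progression (X/H + Y/H = 2·(Z/H)). If X ∩ A, Y ∩ B, Z ∩ C are all nonempty, then none of X, Y, Z is monochromatic (i.e., each of X, Y, Z meets at least two color classes). -/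
/-!
Pick witnesses `a ∈ X ∩ A`, `b ∈ Y ∩ B`, `c ∈ Z ∩ C`. A monochromatic coset takes the colour of
its witness, and then completing the other two witnesses to a 3-term progression stays inside
that coset: `2c - b ∈ X`, `2c - a ∈ Y`, and the midpoint `(a + b) / 2 ∈ Z` (halving is possible
because the order is odd). Each completion produces a rainbow progression.
-/

open Pointwise

lemma RainbowFree.add_ne_two_nsmul {G : Type*} [AddCommGroup G] {A B C : Set G}
    (hrf : RainbowFree A B C) {a b c : G} (ha : a ∈ A) (hb : b ∈ B) (hc : c ∈ C) :
    a + b ≠ 2 • c :=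
  fun h ↦ hrf a c b h (Or.inr (Or.inl ⟨ha, hc, hb⟩))

lemma mem_singleton_add_iff_mk_eq {G : Type*} [AddCommGroup G] (H : AddSubgroup G) (x s : G) :
    s ∈ ({x} + (H : Set G)) ↔ (s : G ⧸ H) = x := by
  rw [Set.singleton_add, QuotientAddGroup.eq_iff_sub_mem]
  constructor
  · rintro ⟨h, hH, rfl⟩
    simpa using hH
  · exact fun hs ↦ ⟨s - x, hs, add_sub_cancel x s⟩

lemma exists_two_mul_nsmul_eq_self_of_odd_card {G : Type*} [AddGroup G] [Fintype G]
    (hodd : Odd (Fintype.card G)) : ∃ k : ℕ, ∀ g : G, (2 * k) • g = g := by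
  obtain ⟨m, hm⟩ := hodd
  refine ⟨m + 1, fun g ↦ ?_⟩
  rw [show 2 * (m + 1) = Fintype.card G + 1 by omega, add_nsmul, card_nsmul_eq_zero, one_nsmul,
    zero_add]

theorem three_cosets_not_monochromatic_general {G : Type*} [AddCommGroup G] [Fintype G]
    (hodd : Odd (Fintype.card G)) (A B C : Set G)
    (hAB : Disjoint A B) (hAC : Disjoint A C) (hBC : Disjoint B C)
    (hrf : RainbowFree A B C)
    (H : AddSubgroup G) (x y z : G)
    (hap : x + y - 2 • z ∈ H)
    (hXA : (({x} + (H : Set G)) ∩ A).Nonempty)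
    (hYB : (({y} + (H : Set G)) ∩ B).Nonempty)
    (hZC : (({z} + (H : Set G)) ∩ C).Nonempty) :
    (¬ (({x} + (H : Set G)) ⊆ A ∨ ({x} + (H : Set G)) ⊆ B ∨ ({x} + (H : Set G)) ⊆ C)) ∧
    (¬ (({y} + (H : Set G)) ⊆ A ∨ ({y} + (H : Set G)) ⊆ B ∨ ({y} + (H : Set G)) ⊆ C)) ∧
    (¬ (({z} + (H : Set G)) ⊆ A ∨ ({z} + (H : Set G)) ⊆ B ∨ ({z} + (H : Set G)) ⊆ C)) := by
  obtain ⟨a, haX, haA⟩ := hXA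
  obtain ⟨b, hbY, hbB⟩ := hYB
  obtain ⟨c, hcZ, hcC⟩ := hZC
  obtain ⟨k, hk⟩ := exists_two_mul_nsmul_eq_self_of_odd_card hodd
  have hxyz : (x : G ⧸ H) + y = 2 • (z : G ⧸ H) := by
    rw [← sub_eq_zero, ← QuotientAddGroup.mk_add, ← QuotientAddGroup.mk_nsmul,
      ← QuotientAddGroup.mk_sub, QuotientAddGroup.eq_zero_iff]
    exact hap
  simp only [mem_singleton_add_iff_mk_eq] at haX hbY hcZ
  simp only [Set.subset_def, mem_singleton_add_iff_mk_eq]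
  refine ⟨?_, ?_, ?_⟩
  · rintro (hX | hX | hX)
    · refine hrf.add_ne_two_nsmul (hX _ ?_) hbB hcC (sub_add_cancel _ _)
      simp only [QuotientAddGroup.mk_sub, QuotientAddGroup.mk_nsmul, hbY, hcZ, ← hxyz,
        add_sub_cancel_right]
    · exact hAB.notMem_of_mem_left haA (hX a haX)
    · exact hAC.notMem_of_mem_left haA (hX a haX)
  · rintro (hY | hY | hY)
    · exact hAB.notMem_of_mem_left (hY b hbY) hbB
    · refine hrf.add_ne_two_nsmul haA (hY _ ?_) hcC (add_sub_cancel _ _)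
      simp only [QuotientAddGroup.mk_sub, QuotientAddGroup.mk_nsmul, haX, hcZ, ← hxyz,
        add_sub_cancel_left]
    · exact hBC.notMem_of_mem_left hbB (hY b hbY)
  · rintro (hZ | hZ | hZ)
    · exact hAC.notMem_of_mem_left (hZ c hcZ) hcC
    · exact hBC.notMem_of_mem_left (hZ c hcZ) hcC
    · refine hrf.add_ne_two_nsmul haA hbB (hZ (k • (a + b)) ?_) (by rw [smul_smul, hk])
      rw [QuotientAddGroup.mk_nsmul, QuotientAddGroup.mk_add, haX, hbY, hxyz, smul_smul,
        mul_comm, ← QuotientAddGroup.mk_nsmul, hk]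

theorem three_cosets_not_monochromatic {G : Type*} [AddCommGroup G] [Fintype G]
    (hodd : Odd (Fintype.card G)) (A B C : Set G)
    (hcover : A ∪ B ∪ C = Set.univ)
    (hAB : Disjoint A B) (hAC : Disjoint A C) (hBC : Disjoint B C)
    (hrf : RainbowFree A B C)
    (H : AddSubgroup G) (x y z : G)
    (hap : x + y - 2 • z ∈ H)
    (hXA : (({x} + (H : Set G)) ∩ A).Nonempty)
    (hYB : (({y} + (H : Set G)) ∩ B).Nonempty)
    (hZC : (({z} + (H : Set G)) ∩ C).Nonempty) :
    (¬ (({x} + (H : Set G)) ⊆ A ∨ ({x} + (H : Set G)) ⊆ B ∨ ({x} + (H : Set G)) ⊆ C)) ∧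
    (¬ (({y} + (H : Set G)) ⊆ A ∨ ({y} + (H : Set G)) ⊆ B ∨ ({y} + (H : Set G)) ⊆ C)) ∧
    (¬ (({z} + (H : Set G)) ⊆ A ∨ ({z} + (H : Set G)) ⊆ B ∨ ({z} + (H : Set G)) ⊆ C)) :=
  three_cosets_not_monochromatic_general hodd A B C hAB hAC hBC hrf H x y z hap hXA hYB hZC
end

section
/- Let G be a finite abelian group of odd order with a rainbow-free 3-coloring with nonempty color classes A, B, C such that A = {0}. Then 2·B = B = −B and 2·C = C = −C. -/
/-!
Both doubling and negation are injective on `G` (doubling because `|G|` is odd) and fix `0`.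
For `y ∈ B`, the progressions `(0, y, 2y)` and `(y, 0, -y)` start in `A = {0}`, so by
rainbow-freeness neither `2y` nor `-y` lies in `C`; nor are they `0`, by injectivity. Hence
both maps send `B` into itself, and an injective self-map of a finite set sending `B` into `B`
maps `B` onto `B`. The same argument applies to `C`.
-/

open Pointwise

section

open Set

variable {G : Type*} [AddCommGroup G] {A B C : Set G}

theorem RainbowFree.swap (hrf : RainbowFree A B C) : RainbowFree A C B := by
  intro x y z hxyz
  have := hrf x y z hxyz
  tauto

theorem RainbowFree.two_nsmul_notMem (hrf : RainbowFree A B C) (h0 : 0 ∈ A) {y : G}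
    (hy : y ∈ B) : 2 • y ∉ C :=
  fun h ↦ hrf 0 y (2 • y) (zero_add _) (Or.inl ⟨h0, hy, h⟩)

theorem RainbowFree.neg_notMem (hrf : RainbowFree A B C) (h0 : 0 ∈ A) {y : G}
    (hy : y ∈ B) : -y ∉ C :=
  fun h ↦ hrf y 0 (-y) (by simp) (Or.inr (Or.inr (Or.inl ⟨hy, h0, h⟩)))

theorem image_eq_of_map_zero_of_notMem [Finite G] (hcover : {0} ∪ B ∪ C = univ)
    (h0B : (0 : G) ∉ B) (f : G ↪ G) (hf0 : f 0 = 0) (hfC : ∀ y ∈ B, f y ∉ C) :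
    f '' B = B := by
  refine map_eq_of_subset ?_
  rintro _ ⟨y, hy, rfl⟩
  have hfy : f y ∈ {0} ∪ B ∪ C := hcover ▸ mem_univ _
  rcases hfy with (hzero | hB) | hC
  · exact absurd (f.injective (hzero.trans hf0.symm) ▸ hy) h0B
  · exact hB
  · exact absurd hC (hfC y hy)

theorem RainbowFree.two_nsmul_image_eq_and_neg_eq [Finite G] (hodd : Odd (Nat.card G))
    (hrf : RainbowFree {0} B C) (hcover : {0} ∪ B ∪ C = univ) (h0B : (0 : G) ∉ B) :
    (fun t : G ↦ 2 • t) '' B = B ∧ -B = B := by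
  have hdouble : Function.Injective (fun t : G ↦ 2 • t) :=
    (Nat.Coprime.nsmul_right_bijective (Nat.coprime_two_right.mpr hodd)).injective
  refine ⟨image_eq_of_map_zero_of_notMem hcover h0B ⟨_, hdouble⟩ (smul_zero 2)
    fun y hy ↦ hrf.two_nsmul_notMem rfl hy, ?_⟩
  rw [← image_neg_eq_neg]
  exact image_eq_of_map_zero_of_notMem hcover h0B ⟨_, neg_injective⟩ neg_zero
    fun y hy ↦ hrf.neg_notMem rfl hy

end

theorem structure_of_singleton_class_general {G : Type*} [AddCommGroup G] [Fintype G]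
    (hodd : Odd (Fintype.card G)) (A B C : Set G)
    (hcover : A ∪ B ∪ C = Set.univ)
    (hAB : Disjoint A B) (hAC : Disjoint A C)
    (hrf : RainbowFree A B C) (hA : A = {0}) :
    (fun t : G => 2 • t) '' B = B ∧ -B = B ∧
    (fun t : G => 2 • t) '' C = C ∧ -C = C := by
  subst hA
  rw [← Nat.card_eq_fintype_card] at hodd
  have hcover' : {0} ∪ C ∪ B = Set.univ := by rwa [Set.union_right_comm]
  exact and_assoc.mp
    ⟨hrf.two_nsmul_image_eq_and_neg_eq hodd hcover (Set.disjoint_left.mp hAB rfl),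
      hrf.swap.two_nsmul_image_eq_and_neg_eq hodd hcover' (Set.disjoint_left.mp hAC rfl)⟩

theorem structure_of_singleton_class {G : Type*} [AddCommGroup G] [Fintype G]
    (hodd : Odd (Fintype.card G)) (A B C : Set G)
    (hcover : A ∪ B ∪ C = Set.univ)
    (hAB : Disjoint A B) (hAC : Disjoint A C) (hBC : Disjoint B C)
    (hBne : B.Nonempty) (hCne : C.Nonempty)
    (hrf : RainbowFree A B C) (hA : A = {0}) :
    (fun t : G => 2 • t) '' B = B ∧ -B = B ∧
    (fun t : G => 2 • t) '' C = C ∧ -C = C :=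
  structure_of_singleton_class_general hodd A B C hcover hAB hAC hrf hA
end

section
/- Let G be a finite abelian group of odd order and let {A, B, C} be a partition of G into three sets. Suppose there is a proper subgroup H of G such that: (i) A ⊆ H and the coloring induced on H (by classes A ∩ H, B ∩ H, C ∩ H) is rainbow-free; (ii) B \ H and C \ H are H-periodic (unions of H-cosets); (iii) with B̃ = B \ H and C̃ = C \ H, one has B̃ = −B̃ = 2·B̃ and C̃ = −C̃ = 2·C̃. Then the coloring {A, B, C} of G is rainbow-free. -/
/-!
A rainbow progression `x + z = 2 • y` has a term in `A ⊆ H`. If that term is an endpoint `x`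
and `y ∉ H`, then `z = 2 • y - x ∈ 2 • (P \ H) + H = P \ H` for the class `P` of `y`; if it is
the middle term `y` and `x ∉ H`, then `z = -x + 2 • y ∈ -(P \ H) + H = P \ H`. Either way two
terms share a colour, so every rainbow progression lies in `H`, where the induced coloring is
rainbow-free.
-/

open Pointwise

section Progressions

variable {G : Type*} [AddCommGroup G] {H : AddSubgroup G} {S P Q : Set G} {x y z : G}

lemma ap_right_mem_of_left_mem (hper : S + (H : Set G) = S)
    (hdouble : (fun t : G => 2 • t) '' S ⊆ S) (hx : x ∈ H) (hy : y ∈ S) (heq : x + z = 2 • y) :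
    z ∈ S := by
  have hz : z = 2 • y + -x := by rw [← heq]; abel
  exact hz ▸ hper ▸ Set.add_mem_add (hdouble ⟨y, hy, rfl⟩) (H.neg_mem hx)

lemma ap_right_mem_of_mid_mem (hper : S + (H : Set G) = S) (hneg : -S ⊆ S)
    (hy : y ∈ H) (hx : x ∈ S) (heq : x + z = 2 • y) : z ∈ S := by
  have hz : z = -x + 2 • y := by rw [← heq]; abel
  exact hz ▸ hper ▸ Set.add_mem_add (hneg (Set.neg_mem_neg.mpr hx)) (H.nsmul_mem hy 2)

lemma ap_mem_of_left_mem (hPQ : Disjoint P Q) (hper : P \ H + (H : Set G) = P \ H)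
    (hdouble : (fun t : G => 2 • t) '' (P \ H) ⊆ P \ H)
    (hx : x ∈ H) (hy : y ∈ P) (hz : z ∈ Q) (heq : x + z = 2 • y) :
    x ∈ H ∧ y ∈ H ∧ z ∈ H := by
  have hyH : y ∈ H := by
    by_contra hyH
    exact hPQ.ne_of_mem (ap_right_mem_of_left_mem hper hdouble hx ⟨hy, hyH⟩ heq).1 hz rfl
  have hzeq : z = 2 • y - x := eq_sub_of_add_eq' heq
  exact ⟨hx, hyH, hzeq ▸ H.sub_mem (H.nsmul_mem hyH 2) hx⟩

lemma ap_mem_of_mid_mem (hPQ : Disjoint P Q) (hper : P \ H + (H : Set G) = P \ H)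
    (hneg : -(P \ H) ⊆ P \ H) (hy : y ∈ H) (hx : x ∈ P) (hz : z ∈ Q) (heq : x + z = 2 • y) :
    x ∈ H ∧ y ∈ H ∧ z ∈ H := by
  have hxH : x ∈ H := by
    by_contra hxH
    exact hPQ.ne_of_mem (ap_right_mem_of_mid_mem hper hneg hy ⟨hx, hxH⟩ heq).1 hz rfl
  have hzeq : z = 2 • y - x := eq_sub_of_add_eq' heq
  exact ⟨hxH, hy, hzeq ▸ H.sub_mem (H.nsmul_mem hy 2) hxH⟩

end Progressions

theorem rainbowFree_of_structured_general {G : Type*} [AddCommGroup G] (A B C : Set G)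
    (hBC : Disjoint B C)
    (H : AddSubgroup G)
    (hAH : A ⊆ (H : Set G))
    (hind : ∀ x y z : G, x ∈ H → y ∈ H → z ∈ H → x + z = 2 • y →
      ¬ ((x ∈ A ∧ y ∈ B ∧ z ∈ C) ∨ (x ∈ A ∧ y ∈ C ∧ z ∈ B) ∨
         (x ∈ B ∧ y ∈ A ∧ z ∈ C) ∨ (x ∈ B ∧ y ∈ C ∧ z ∈ A) ∨
         (x ∈ C ∧ y ∈ A ∧ z ∈ B) ∨ (x ∈ C ∧ y ∈ B ∧ z ∈ A)))
    (hBper : (B \ (H : Set G)) + (H : Set G) = B \ (H : Set G))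
    (hCper : (C \ (H : Set G)) + (H : Set G) = C \ (H : Set G))
    (hBsym : -(B \ (H : Set G)) = B \ (H : Set G))
    (hB2 : (fun t : G => 2 • t) '' (B \ (H : Set G)) = B \ (H : Set G))
    (hCsym : -(C \ (H : Set G)) = C \ (H : Set G))
    (hC2 : (fun t : G => 2 • t) '' (C \ (H : Set G)) = C \ (H : Set G)) :
    RainbowFree A B C := by
  intro x y z heq hmem
  suffices hxyz : x ∈ H ∧ y ∈ H ∧ z ∈ H from hind x y z hxyz.1 hxyz.2.1 hxyz.2.2 heq hmem
  have heq' : z + x = 2 • y := by rwa [add_comm]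
  rcases hmem with ⟨hx, hy, hz⟩ | ⟨hx, hy, hz⟩ | ⟨hx, hy, hz⟩ | ⟨hx, hy, hz⟩ |
    ⟨hx, hy, hz⟩ | ⟨hx, hy, hz⟩
  · exact ap_mem_of_left_mem hBC hBper hB2.subset (hAH hx) hy hz heq
  · exact ap_mem_of_left_mem hBC.symm hCper hC2.subset (hAH hx) hy hz heq
  · exact ap_mem_of_mid_mem hBC hBper hBsym.subset (hAH hy) hx hz heq
  · obtain ⟨hz', hy', hx'⟩ := ap_mem_of_left_mem hBC.symm hCper hC2.subset (hAH hz) hy hx heq'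
    exact ⟨hx', hy', hz'⟩
  · exact ap_mem_of_mid_mem hBC.symm hCper hCsym.subset (hAH hy) hx hz heq
  · obtain ⟨hz', hy', hx'⟩ := ap_mem_of_left_mem hBC hBper hB2.subset (hAH hz) hy hx heq'
    exact ⟨hx', hy', hz'⟩

theorem rainbowFree_of_structured {G : Type*} [AddCommGroup G] [Fintype G]
    (hodd : Odd (Fintype.card G)) (A B C : Set G)
    (hcover : A ∪ B ∪ C = Set.univ)
    (hAB : Disjoint A B) (hAC : Disjoint A C) (hBC : Disjoint B C)
    (H : AddSubgroup G) (hH : H ≠ ⊤)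
    (hAH : A ⊆ (H : Set G))
    (hind : ∀ x y z : G, x ∈ H → y ∈ H → z ∈ H → x + z = 2 • y →
      ¬ ((x ∈ A ∧ y ∈ B ∧ z ∈ C) ∨ (x ∈ A ∧ y ∈ C ∧ z ∈ B) ∨
         (x ∈ B ∧ y ∈ A ∧ z ∈ C) ∨ (x ∈ B ∧ y ∈ C ∧ z ∈ A) ∨
         (x ∈ C ∧ y ∈ A ∧ z ∈ B) ∨ (x ∈ C ∧ y ∈ B ∧ z ∈ A)))
    (hBper : (B \ (H : Set G)) + (H : Set G) = B \ (H : Set G))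
    (hCper : (C \ (H : Set G)) + (H : Set G) = C \ (H : Set G))
    (hBsym : -(B \ (H : Set G)) = B \ (H : Set G))
    (hB2 : (fun t : G => 2 • t) '' (B \ (H : Set G)) = B \ (H : Set G))
    (hCsym : -(C \ (H : Set G)) = C \ (H : Set G))
    (hC2 : (fun t : G => 2 • t) '' (C \ (H : Set G)) = C \ (H : Set G)) :
    RainbowFree A B C :=
  rainbowFree_of_structured_general A B C hBC H hAH hind hBper hCper hBsym hB2 hCsym hC2
end

section
/- Let G be a finite abelian group of odd order with a rainbow-free 3-coloring with nonempty color classes A, B, C, and suppose |A| = 2, say A = {0, a}. Then a generates a proper subgroup of G (i.e., the cyclic subgroup ⟨a⟩ is not all of G). -/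
/-!
Suppose `a` generated `G`, and write the elements outside `A` as `k • a` with
`2 ≤ k < n = addOrderOf a`. Rainbow-freeness says that the two outer terms of a progression whose
middle term lies in `A` get the same color when neither lies in `A`. The progressions
`(k • a, 0, -(k • a))` and `(-(k • a), a, (k + 2) • a)` thus give `k • a` and `(k + 2) • a` the same
color for `2 ≤ k ≤ n - 3`, and the progression `(a, 2 • a, 3 • a)` joins the even chain to the odd
one. So `G \ A` is monochromatic, which is impossible when `B` and `C` are both nonempty.
-/

theorem Set.mem_of_union_eq_univ_of_notMem {α : Type*} {A B C : Set α}
    (hcover : A ∪ B ∪ C = Set.univ) {x : α} (hA : x ∉ A) (hB : x ∉ B) : x ∈ C := by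
  have hx : x ∈ A ∪ B ∪ C := hcover ▸ Set.mem_univ x
  rcases hx with (hx | hx) | hx
  exacts [absurd hx hA, absurd hx hB, hx]

theorem Nat.iff_of_forall_iff_add_two {P : ℕ → Prop} {m N : ℕ}
    (hstep : ∀ k, m ≤ k → k + 2 ≤ N → (P k ↔ P (k + 2))) :
    ∀ j, m + 2 * j ≤ N → (P (m + 2 * j) ↔ P m)
  | 0, _ => Iff.rfl
  | j + 1, hj => by
    rw [show m + 2 * (j + 1) = m + 2 * j + 2 by ring]
    exact (hstep (m + 2 * j) (Nat.le_add_right _ _) hj).symm.trans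
      (Nat.iff_of_forall_iff_add_two hstep j (by omega))

section RainbowFree

variable {G : Type*} [AddCommGroup G] {A B C : Set G} {x y z : G}

theorem RainbowFree.mem_iff_of_midpoint_mem (hrf : RainbowFree A B C)
    (hcover : A ∪ B ∪ C = Set.univ) (h : x + z = 2 • y) (hy : y ∈ A) (hx : x ∉ A) (hz : z ∉ A) :
    x ∈ B ↔ z ∈ B := by
  have outer : ∀ {u v : G}, u + v = 2 • y → u ∈ B → v ∉ A → v ∈ B := fun huv hu hv =>
    by_contra fun hvB => hrf _ y _ huv <|
      .inr <| .inr <| .inl ⟨hu, hy, Set.mem_of_union_eq_univ_of_notMem hcover hv hvB⟩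
  exact ⟨fun hxB => outer h hxB hz, fun hzB => outer ((add_comm z x).trans h) hzB hx⟩

theorem RainbowFree.mem_iff_of_left_mem (hrf : RainbowFree A B C)
    (hcover : A ∪ B ∪ C = Set.univ) (h : x + z = 2 • y) (hx : x ∈ A) (hy : y ∉ A) (hz : z ∉ A) :
    y ∈ B ↔ z ∈ B :=
  ⟨fun hyB => by_contra fun hzB =>
      hrf x y z h <| .inl ⟨hx, hyB, Set.mem_of_union_eq_univ_of_notMem hcover hz hzB⟩,
    fun hzB => by_contra fun hyB =>
      hrf x y z h <| .inr <| .inl ⟨hx, Set.mem_of_union_eq_univ_of_notMem hcover hy hyB, hzB⟩⟩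

end RainbowFree

section Multiples

variable {G : Type*} [AddCommGroup G] {a : G} {k : ℕ}

theorem nsmul_notMem_zero_self (hk : 2 ≤ k) (hkn : k < addOrderOf a) :
    k • a ∉ ({0, a} : Set G) := by
  rintro (h | h)
  · exact nsmul_ne_zero_of_lt_addOrderOf (by omega) hkn h
  · have : k = 1 := nsmul_injOn_Iio_addOrderOf hkn (show 1 < addOrderOf a by omega)
      (h.trans (one_nsmul a).symm)
    omega

theorem neg_nsmul_eq_addOrderOf_sub_nsmul (hk : k ≤ addOrderOf a) :
    -(k • a) = (addOrderOf a - k) • a := by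
  rw [sub_nsmul a hk, addOrderOf_nsmul_eq_zero, zero_add]

theorem exists_nsmul_eq_of_notMem_zero_self [Finite G] (htop : AddSubgroup.zmultiples a = ⊤)
    {x : G} (hx : x ∉ ({0, a} : Set G)) : ∃ k, 2 ≤ k ∧ k < addOrderOf a ∧ k • a = x := by
  classical
  have hmem : x ∈ AddSubgroup.zmultiples a := htop ▸ AddSubgroup.mem_top x
  obtain ⟨k, hk, rfl⟩ := Finset.mem_image.1 (mem_zmultiples_iff_mem_range_addOrderOf.1 hmem)
  refine ⟨k, ?_, Finset.mem_range.1 hk, rfl⟩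
  by_contra! hk2
  interval_cases k <;> simp at hx

variable {B C : Set G}

theorem RainbowFree.nsmul_mem_iff_add_two_nsmul_mem (hrf : RainbowFree {0, a} B C)
    (hcover : {0, a} ∪ B ∪ C = Set.univ) (hk : 2 ≤ k) (hkn : k + 3 ≤ addOrderOf a) :
    k • a ∈ B ↔ (k + 2) • a ∈ B := by
  have hneg : -(k • a) ∉ ({0, a} : Set G) := by
    rw [neg_nsmul_eq_addOrderOf_sub_nsmul (by omega)]
    exact nsmul_notMem_zero_self (by omega) (by omega)
  calc k • a ∈ B ↔ -(k • a) ∈ B :=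
        hrf.mem_iff_of_midpoint_mem hcover (y := 0) (by simp) (by simp)
          (nsmul_notMem_zero_self hk (by omega)) hneg
    _ ↔ (k + 2) • a ∈ B :=
        hrf.mem_iff_of_midpoint_mem hcover (y := a) (by rw [add_nsmul, neg_add_cancel_left])
          (by simp) hneg (nsmul_notMem_zero_self (by omega) (by omega))

theorem RainbowFree.nsmul_mem_iff_two_nsmul_mem (hrf : RainbowFree {0, a} B C)
    (hcover : {0, a} ∪ B ∪ C = Set.univ) (hk : 2 ≤ k) (hkn : k < addOrderOf a) :
    k • a ∈ B ↔ 2 • a ∈ B := by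
  have step (m : ℕ) (hm : 2 ≤ m) :=
    Nat.iff_of_forall_iff_add_two (P := fun i ↦ i • a ∈ B) (m := m) (N := addOrderOf a - 1)
      fun i hi hin ↦ hrf.nsmul_mem_iff_add_two_nsmul_mem hcover (hm.trans hi) (by omega)
  obtain ⟨j, hj | hj⟩ := Nat.even_or_odd' (k - 2)
  · obtain rfl : k = 2 + 2 * j := by omega
    exact step 2 le_rfl j (by omega)
  · obtain rfl : k = 3 + 2 * j := by omega
    have link : 2 • a ∈ B ↔ 3 • a ∈ B :=
      hrf.mem_iff_of_left_mem hcover (by abel) (by simp)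
        (nsmul_notMem_zero_self le_rfl (by omega)) (nsmul_notMem_zero_self (by omega) (by omega))
    exact (step 3 (by omega) j (by omega)).trans link.symm

end Multiples

theorem generator_proper_of_card_two_class_general {G : Type*} [AddCommGroup G] [Fintype G]
    (A B C : Set G)
    (hcover : A ∪ B ∪ C = Set.univ)
    (hAB : Disjoint A B) (hAC : Disjoint A C) (hBC : Disjoint B C)
    (hBne : B.Nonempty) (hCne : C.Nonempty)
    (hrf : RainbowFree A B C)
    (a : G) (hA : A = {0, a}) :
    AddSubgroup.zmultiples a ≠ ⊤ := by
  subst hA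
  intro htop
  obtain ⟨b, hb⟩ := hBne
  obtain ⟨c, hc⟩ := hCne
  obtain ⟨k, hk, hkn, rfl⟩ := exists_nsmul_eq_of_notMem_zero_self htop (hAB.notMem_of_mem_right hb)
  obtain ⟨l, hl, hln, rfl⟩ := exists_nsmul_eq_of_notMem_zero_self htop (hAC.notMem_of_mem_right hc)
  have hcB : l • a ∈ B :=
    (hrf.nsmul_mem_iff_two_nsmul_mem hcover hl hln).2
      ((hrf.nsmul_mem_iff_two_nsmul_mem hcover hk hkn).1 hb)
  exact hBC.notMem_of_mem_left hcB hc

theorem generator_proper_of_card_two_class {G : Type*} [AddCommGroup G] [Fintype G]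
    (hodd : Odd (Fintype.card G)) (A B C : Set G)
    (hcover : A ∪ B ∪ C = Set.univ)
    (hAB : Disjoint A B) (hAC : Disjoint A C) (hBC : Disjoint B C)
    (hBne : B.Nonempty) (hCne : C.Nonempty)
    (hrf : RainbowFree A B C)
    (a : G) (ha : a ≠ 0) (hA : A = {0, a}) :
    AddSubgroup.zmultiples a ≠ ⊤ :=
  generator_proper_of_card_two_class_general A B C hcover hAB hAC hBC hBne hCne hrf a hA
end

section
/- Let n be odd and let {A, B, C} be a rainbow-free 3-coloring of Z/nZ with nonempty color classes such that A = {0, 1, 2} and B = {x, x+2, x+3} for some x. Then a contradiction follows; i.e., no such rainbow-free coloring exists. -/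
/-!
The progression `(2, x + 2, 2x + 2)` has its first two terms in `A` and `B`, so its third lies in
`A ∪ B`; as `2` is invertible this forces `2x + 2 = 1`. Then `(0, x, -1)` is a progression, which
puts `-1` in `B`, i.e. `x = -4`, and now `7 = 0` in `ZMod n`. But then `(2, -3, -1)` is a
progression with ends in `A` and `B` whose middle term lies in neither, a rainbow. For odd `n < 7`
the excluded residues exhaust `ZMod n`.
-/

open Pointwise

namespace ZMod

variable {n : ℕ}

lemma mem_of_odd_of_lt_seven (hn : Odd n) (h7 : n < 7) (z : ZMod n) :
    z ∈ ({0, 1, 2, -3, -2, -1} : Set (ZMod n)) := by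
  obtain ⟨k, rfl⟩ := hn
  have hk : k < 3 := by omega
  interval_cases k <;> revert z <;> decide

lemma natCast_ne_zero_of_pos_of_lt {k : ℕ} (hk : 0 < k) (hkn : k < n) : (k : ZMod n) ≠ 0 :=
  fun h => absurd (Nat.le_of_dvd hk ((natCast_eq_zero_iff k n).mp h)) (by omega)

lemma isUnit_two_of_odd (hn : Odd n) : IsUnit (2 : ZMod n) := by
  simpa using (isUnit_iff_coprime 2 n).mpr (Nat.coprime_two_left.mpr hn)

end ZMod

namespace RainbowFree

section

variable {G : Type*} [AddCommGroup G] {A B C : Set G} {a b c : G}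

lemma mem_union_of_mem_left_mid (hrf : RainbowFree A B C) (hcover : A ∪ B ∪ C = Set.univ)
    (ha : a ∈ A) (hb : b ∈ B) (h : a + c = 2 • b) : c ∈ A ∪ B :=
  (hcover ▸ Set.mem_univ c).resolve_right fun hc => hrf a b c h (.inl ⟨ha, hb, hc⟩)

lemma mem_union_of_mem_left_right (hrf : RainbowFree A B C) (hcover : A ∪ B ∪ C = Set.univ)
    (ha : a ∈ A) (hc : c ∈ B) (h : a + c = 2 • b) : b ∈ A ∪ B :=
  (hcover ▸ Set.mem_univ b).resolve_right fun hb => hrf a b c h (.inr (.inl ⟨ha, hb, hc⟩))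

end

variable {n : ℕ} {C : Set (ZMod n)} {x : ZMod n}

lemma two_mul_add_two_eq_one (hrf : RainbowFree {0, 1, 2} {x, x + 2, x + 3} C) (hn : Odd n)
    (hcover : {0, 1, 2} ∪ {x, x + 2, x + 3} ∪ C = Set.univ)
    (hx0 : x ≠ 0) (hx1 : x ≠ 1) (hxm2 : x ≠ -2) (hxm1 : x ≠ -1) : 2 * x + 2 = 1 := by
  have hmem := hrf.mem_union_of_mem_left_mid (a := 2) (b := x + 2) (c := 2 * x + 2) hcover
    (by simp) (by simp) (by rw [two_nsmul]; ring)
  have hcancel : ∀ c : ZMod n, 2 * x = 2 * c → x = c := fun _ =>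
    (ZMod.isUnit_two_of_odd hn).mul_left_cancel
  simp only [Set.mem_union, Set.mem_insert_iff, Set.mem_singleton_iff] at hmem
  rcases hmem with (h | h | h) | h | h | h
  · exact absurd (hcancel (-1) (by linear_combination h)) hxm1
  · exact h
  · exact absurd (hcancel 0 (by linear_combination h)) hx0
  · exact absurd (by linear_combination h) hxm2
  · exact absurd (by linear_combination h) hx0
  · exact absurd (by linear_combination h) hx1

lemma eq_neg_four (hrf : RainbowFree {0, 1, 2} {x, x + 2, x + 3} C) (h7 : 7 ≤ n)
    (hcover : {0, 1, 2} ∪ {x, x + 2, x + 3} ∪ C = Set.univ)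
    (hxm3 : x ≠ -3) (hxm1 : x ≠ -1) (hx : 2 * x + 2 = 1) : x = -4 := by
  have hmem := hrf.mem_union_of_mem_left_mid (a := 0) (b := x) (c := -1) hcover
    (by simp) (by simp) (by rw [two_nsmul]; linear_combination -hx)
  simp only [Set.mem_union, Set.mem_insert_iff, Set.mem_singleton_iff] at hmem
  rcases hmem with (h | h | h) | h | h | h
  · exact absurd (by push_cast; linear_combination -h)
      (ZMod.natCast_ne_zero_of_pos_of_lt (k := 1) (by norm_num) (by omega))
  · exact absurd (by push_cast; linear_combination -h)
      (ZMod.natCast_ne_zero_of_pos_of_lt (k := 2) (by norm_num) (by omega))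
  · exact absurd (by push_cast; linear_combination -h)
      (ZMod.natCast_ne_zero_of_pos_of_lt (k := 3) (by norm_num) (by omega))
  · exact absurd (by linear_combination -h) hxm1
  · exact absurd (by linear_combination -h) hxm3
  · linear_combination -h

lemma ne_neg_four (hrf : RainbowFree {0, 1, 2} {x, x + 2, x + 3} C) (h7 : 7 ≤ n)
    (hcover : {0, 1, 2} ∪ {x, x + 2, x + 3} ∪ C = Set.univ)
    (hx : 2 * x + 2 = 1) : x ≠ -4 := by
  rintro rfl
  -- `2 * (-4) + 2 = 1` means `7 = 0`, which makes `(2, -3, -1)` a progression.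
  have hmem := hrf.mem_union_of_mem_left_right (a := 2) (b := -3) (c := -1) hcover
    (by simp) (by norm_num) (by rw [two_nsmul]; linear_combination -hx)
  simp only [Set.mem_union, Set.mem_insert_iff, Set.mem_singleton_iff] at hmem
  rcases hmem with (h | h | h) | h | h | h
  · exact absurd (by push_cast; linear_combination -h)
      (ZMod.natCast_ne_zero_of_pos_of_lt (k := 3) (by norm_num) (by omega))
  · exact absurd (by push_cast; linear_combination -h)
      (ZMod.natCast_ne_zero_of_pos_of_lt (k := 4) (by norm_num) (by omega))
  · exact absurd (by push_cast; linear_combination -h)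
      (ZMod.natCast_ne_zero_of_pos_of_lt (k := 5) (by norm_num) (by omega))
  · exact absurd (by push_cast; linear_combination h)
      (ZMod.natCast_ne_zero_of_pos_of_lt (k := 1) (by norm_num) (by omega))
  · exact absurd (by push_cast; linear_combination -h)
      (ZMod.natCast_ne_zero_of_pos_of_lt (k := 1) (by norm_num) (by omega))
  · exact absurd (by push_cast; linear_combination -h)
      (ZMod.natCast_ne_zero_of_pos_of_lt (k := 2) (by norm_num) (by omega))

end RainbowFree

theorem no_rainbowFree_with_explicit_progressions_general (n : ℕ) (hn : Odd n)
    (A B C : Set (ZMod n))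
    (hcover : A ∪ B ∪ C = Set.univ)
    (hrf : RainbowFree A B C)
    (x : ZMod n)
    (hA : A = {0, 1, 2}) (hB : B = {x, x + 2, x + 3})
    (hx : x ∉ ({0, 1, 2, -3, -2, -1} : Set (ZMod n))) :
    False := by
  rcases Nat.lt_or_ge n 7 with h7 | h7
  · exact hx (ZMod.mem_of_odd_of_lt_seven hn h7 x)
  subst hA hB
  simp only [Set.mem_insert_iff, Set.mem_singleton_iff, not_or] at hx
  obtain ⟨hx0, hx1, -, hxm3, hxm2, hxm1⟩ := hx
  have h2x := hrf.two_mul_add_two_eq_one hn hcover hx0 hx1 hxm2 hxm1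
  exact hrf.ne_neg_four h7 hcover h2x (hrf.eq_neg_four h7 hcover hxm3 hxm1 h2x)

theorem no_rainbowFree_with_explicit_progressions (n : ℕ) (hn : Odd n)
    (A B C : Set (ZMod n))
    (hcover : A ∪ B ∪ C = Set.univ)
    (hAB : Disjoint A B) (hAC : Disjoint A C) (hBC : Disjoint B C)
    (hCne : C.Nonempty)
    (hrf : RainbowFree A B C)
    (x : ZMod n)
    (hA : A = {0, 1, 2}) (hB : B = {x, x + 2, x + 3})
    (hx : x ∉ ({0, 1, 2, -3, -2, -1} : Set (ZMod n))) :
    False :=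
  no_rainbowFree_with_explicit_progressions_general n hn A B C hcover hrf x hA hB hx
end

section
/- Let G be a cyclic group of order 2^m · l with l > 1 odd and m ≥ 1, and let {A, B, C} be a rainbow-free 3-coloring of G with nonempty color classes. Let P₀ = 2·G = {2g : g ∈ G} (the index-2 subgroup of G) and let P₁ be its nontrivial coset. Then neither P₀ nor P₁ is monochromatic. -/
/-!
If a coset `P` of `2G` were monochromatic, say of colour `A`, then `B ∪ C` would lie in the
other coset. Rainbow-freeness puts every `y` with `2y = b + c` (`b ∈ B`, `c ∈ C`) back into
`B ∪ C`; comparing `y - b` with `c - b` shows that a set lying in a coset of `2^k G` in fact lies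
in a coset of `2^(k+1) G`. But `b` and `c` have two such midpoints `y`, differing by the element
`n / 2` of order two, so `n / 2 ∈ 2^m G`, which fails in `ℤ/2^m lℤ` for odd `l`.
-/

open Pointwise

section MidpointClosed

variable {G : Type*} [AddCommGroup G] {Y Z : Set G}

theorem sub_mem_range_nsmul_two_pow_succ
    (hmid : ∀ b ∈ Y, ∀ c ∈ Z, ∀ y : G, 2 • y = b + c → y ∈ Y ∪ Z)
    (hY : Y.Nonempty) (hZ : Z.Nonempty) {k : ℕ}
    (hk : ∀ s ∈ Y ∪ Z, ∀ t ∈ Y ∪ Z,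
      s - t ∈ (nsmulAddMonoidHom (α := G) (2 ^ (k + 1))).range) :
    ∀ s ∈ Y ∪ Z, ∀ t ∈ Y ∪ Z,
      s - t ∈ (nsmulAddMonoidHom (α := G) (2 ^ (k + 2))).range := by
  set H := (nsmulAddMonoidHom (α := G) (2 ^ (k + 2))).range
  have cross : ∀ b ∈ Y, ∀ c ∈ Z, c - b ∈ H := by
    intro b hb c hc
    obtain ⟨u, hu⟩ := hk c (Or.inr hc) b (Or.inl hb)
    rw [nsmulAddMonoidHom_apply] at hu
    have hy : 2 • (b + 2 ^ k • u) = b + c := by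
      rw [smul_add, smul_smul, ← pow_succ', hu]; abel
    obtain ⟨v, hv⟩ := hk _ (hmid b hb c hc _ hy) b (Or.inl hb)
    rw [nsmulAddMonoidHom_apply, add_sub_cancel_left] at hv
    refine ⟨v, ?_⟩
    rw [nsmulAddMonoidHom_apply, pow_succ', mul_smul, hv, smul_smul, ← pow_succ', hu]
  obtain ⟨b₀, hb₀⟩ := hY
  obtain ⟨c₀, hc₀⟩ := hZ
  rintro s (hs | hs) t (ht | ht)
  · rw [← sub_sub_sub_cancel_left t s c₀]
    exact H.sub_mem (cross t ht c₀ hc₀) (cross s hs c₀ hc₀)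
  · rw [← neg_sub]
    exact H.neg_mem (cross s hs t ht)
  · exact cross t ht s hs
  · rw [← sub_sub_sub_cancel_right s t b₀]
    exact H.sub_mem (cross b₀ hb₀ s hs) (cross b₀ hb₀ t ht)

theorem sub_mem_range_nsmul_two_pow
    (hmid : ∀ b ∈ Y, ∀ c ∈ Z, ∀ y : G, 2 • y = b + c → y ∈ Y ∪ Z)
    (hY : Y.Nonempty) (hZ : Z.Nonempty)
    (hcoset : ∀ s ∈ Y ∪ Z, ∀ t ∈ Y ∪ Z, s - t ∈ (nsmulAddMonoidHom (α := G) 2).range)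
    (k : ℕ) :
    ∀ s ∈ Y ∪ Z, ∀ t ∈ Y ∪ Z,
      s - t ∈ (nsmulAddMonoidHom (α := G) (2 ^ (k + 1))).range := by
  induction k with
  | zero => simpa using hcoset
  | succ k ih => exact sub_mem_range_nsmul_two_pow_succ hmid hY hZ ih

theorem mem_range_nsmul_two_pow_of_two_nsmul_eq_zero
    (hmid : ∀ b ∈ Y, ∀ c ∈ Z, ∀ y : G, 2 • y = b + c → y ∈ Y ∪ Z)
    (hY : Y.Nonempty) (hZ : Z.Nonempty)
    (hcoset : ∀ s ∈ Y ∪ Z, ∀ t ∈ Y ∪ Z, s - t ∈ (nsmulAddMonoidHom (α := G) 2).range)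
    {h : G} (h2 : 2 • h = 0) (k : ℕ) :
    h ∈ (nsmulAddMonoidHom (α := G) (2 ^ (k + 1))).range := by
  obtain ⟨b, hb⟩ := hY
  obtain ⟨c, hc⟩ := hZ
  obtain ⟨u, hu⟩ := hcoset c (Or.inr hc) b (Or.inl hb)
  rw [nsmulAddMonoidHom_apply] at hu
  have hy : 2 • (b + u) = b + c := by rw [smul_add, hu]; abel
  have hy' : 2 • (b + u + h) = b + c := by rw [smul_add, h2, add_zero, hy]
  have hdiff := sub_mem_range_nsmul_two_pow hmid ⟨b, hb⟩ ⟨c, hc⟩ hcoset k _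
    (hmid b hb c hc _ hy') _ (hmid b hb c hc _ hy)
  rwa [add_sub_cancel_left] at hdiff

end MidpointClosed

namespace RainbowFree

variable {G : Type*} [AddCommGroup G] {A B C : Set G}

theorem swap₁₂ (hrf : RainbowFree A B C) : RainbowFree B A C :=
  fun x y z hxz hmem => hrf x y z hxz (by tauto)

theorem swap₁₃ (hrf : RainbowFree A B C) : RainbowFree C B A :=
  fun x y z hxz hmem => hrf x y z hxz (by tauto)

theorem two_nsmul_eq_add_mem (hrf : RainbowFree A B C)
    (hcov : ∀ g, g ∈ A ∨ g ∈ B ∨ g ∈ C)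
    {b c y : G} (hb : b ∈ B) (hc : c ∈ C) (hy : 2 • y = b + c) : y ∈ B ∪ C := by
  rcases hcov y with hA | hB | hC
  · exact absurd (Or.inr (Or.inr (Or.inl ⟨hb, hA, hc⟩))) (hrf b y c hy.symm)
  · exact Or.inl hB
  · exact Or.inr hC

end RainbowFree

namespace ZMod

theorem two_pow_mul_odd_not_mem_range_nsmul (k l : ℕ) (hl : Odd l) :
    ((2 ^ k * l : ℕ) : ZMod (2 ^ (k + 1) * l)) ∉
      (nsmulAddMonoidHom (α := ZMod (2 ^ (k + 1) * l)) (2 ^ (k + 1))).range := by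
  rintro ⟨u, hu⟩
  rw [nsmulAddMonoidHom_apply, nsmul_eq_mul] at hu
  have hcast := congrArg (castHom (dvd_mul_right (2 ^ (k + 1)) l) (ZMod (2 ^ (k + 1)))) hu
  rw [map_mul, map_natCast, map_natCast, natCast_self, zero_mul, eq_comm,
    natCast_eq_zero_iff, pow_succ, Nat.mul_dvd_mul_iff_left (by positivity)] at hcast
  exact Nat.not_even_iff_odd.mpr hl (even_iff_two_dvd.mpr hcast)

theorem two_nsmul_two_pow_mul (k l : ℕ) :
    2 • ((2 ^ k * l : ℕ) : ZMod (2 ^ (k + 1) * l)) = 0 := by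
  rw [nsmul_eq_mul, ← Nat.cast_two, ← Nat.cast_mul, ← natCast_self]
  ring_nf

theorem mem_range_two_nsmul_or_sub_one_mem {n : ℕ} (s : ZMod n) :
    s ∈ (nsmulAddMonoidHom (α := ZMod n) 2).range ∨
      s - 1 ∈ (nsmulAddMonoidHom (α := ZMod n) 2).range := by
  obtain ⟨z, rfl⟩ := intCast_surjective s
  obtain ⟨j, rfl | rfl⟩ := Int.even_or_odd' z
  · exact Or.inl ⟨j, by push_cast; simp⟩
  · exact Or.inr ⟨j, by push_cast; simp⟩

theorem sub_mem_range_two_nsmul {n : ℕ} {s t : ZMod n}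
    (hst : s ∈ (nsmulAddMonoidHom (α := ZMod n) 2).range ↔
      t ∈ (nsmulAddMonoidHom (α := ZMod n) 2).range) :
    s - t ∈ (nsmulAddMonoidHom (α := ZMod n) 2).range := by
  by_cases hs : s ∈ (nsmulAddMonoidHom (α := ZMod n) 2).range
  · exact sub_mem hs (hst.mp hs)
  · have ht : t ∉ (nsmulAddMonoidHom (α := ZMod n) 2).range := hst.not.mp hs
    rw [← sub_sub_sub_cancel_right s t 1]
    exact sub_mem ((mem_range_two_nsmul_or_sub_one_mem s).resolve_left hs)
      ((mem_range_two_nsmul_or_sub_one_mem t).resolve_left ht)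

end ZMod

theorem RainbowFree.not_subset_of_compl_subset_coset {k l : ℕ} (hl : Odd l)
    {A B C : Set (ZMod (2 ^ (k + 1) * l))} (hrf : RainbowFree A B C)
    (hcov : ∀ g, g ∈ A ∨ g ∈ B ∨ g ∈ C) (hAB : Disjoint A B) (hAC : Disjoint A C)
    (hB : B.Nonempty) (hC : C.Nonempty) {P : Set (ZMod (2 ^ (k + 1) * l))}
    (hP : ∀ s ∉ P, ∀ t ∉ P,
      s - t ∈ (nsmulAddMonoidHom (α := ZMod (2 ^ (k + 1) * l)) 2).range) :
    ¬ P ⊆ A := by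
  intro hPA
  have hBC : B ∪ C ⊆ Pᶜ := Set.union_subset
    (fun b hb hbP => Set.disjoint_left.mp hAB (hPA hbP) hb)
    (fun c hc hcP => Set.disjoint_left.mp hAC (hPA hcP) hc)
  exact ZMod.two_pow_mul_odd_not_mem_range_nsmul k l hl
    (mem_range_nsmul_two_pow_of_two_nsmul_eq_zero
      (fun _ hb _ hc _ => hrf.two_nsmul_eq_add_mem hcov hb hc) hB hC
      (fun s hs t ht => hP s (hBC hs) t (hBC ht)) (ZMod.two_nsmul_two_pow_mul k l) k)

theorem RainbowFree.not_monochromatic_of_compl_subset_coset {k l : ℕ} (hl : Odd l)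
    {A B C : Set (ZMod (2 ^ (k + 1) * l))} (hrf : RainbowFree A B C)
    (hcov : ∀ g, g ∈ A ∨ g ∈ B ∨ g ∈ C)
    (hAB : Disjoint A B) (hAC : Disjoint A C) (hBC : Disjoint B C)
    (hA : A.Nonempty) (hB : B.Nonempty) (hC : C.Nonempty) {P : Set (ZMod (2 ^ (k + 1) * l))}
    (hP : ∀ s ∉ P, ∀ t ∉ P,
      s - t ∈ (nsmulAddMonoidHom (α := ZMod (2 ^ (k + 1) * l)) 2).range) :
    ¬ (P ⊆ A ∨ P ⊆ B ∨ P ⊆ C) := by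
  rintro (h | h | h)
  · exact hrf.not_subset_of_compl_subset_coset hl hcov hAB hAC hB hC hP h
  · exact hrf.swap₁₂.not_subset_of_compl_subset_coset hl (fun g => or_left_comm.mp (hcov g))
      hAB.symm hBC hA hC hP h
  · exact hrf.swap₁₃.not_subset_of_compl_subset_coset hl (fun g => by have := hcov g; tauto)
      hBC.symm hAC.symm hB hA hP h

theorem index_two_cosets_not_monochromatic_general (m l : ℕ) (hm : 1 ≤ m) (hl : Odd l)
    (n : ℕ) (hn : n = 2 ^ m * l)
    (A B C : Set (ZMod n))
    (hcover : A ∪ B ∪ C = Set.univ)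
    (hAB : Disjoint A B) (hAC : Disjoint A C) (hBC : Disjoint B C)
    (hAne : A.Nonempty) (hBne : B.Nonempty) (hCne : C.Nonempty)
    (hrf : RainbowFree A B C) :
    (¬ ((fun g : ZMod n => g + g) '' Set.univ ⊆ A ∨
        (fun g : ZMod n => g + g) '' Set.univ ⊆ B ∨
        (fun g : ZMod n => g + g) '' Set.univ ⊆ C)) ∧
    (¬ (((fun g : ZMod n => g + g) '' Set.univ)ᶜ ⊆ A ∨
        ((fun g : ZMod n => g + g) '' Set.univ)ᶜ ⊆ B ∨
        ((fun g : ZMod n => g + g) '' Set.univ)ᶜ ⊆ C)) := by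
  obtain ⟨k, rfl⟩ := Nat.exists_eq_add_of_le' hm
  subst hn
  have hcov : ∀ g, g ∈ A ∨ g ∈ B ∨ g ∈ C := fun g => by
    simpa only [Set.mem_union, or_assoc] using Set.eq_univ_iff_forall.mp hcover g
  have hT : (fun g : ZMod (2 ^ (k + 1) * l) => g + g) '' Set.univ =
      (nsmulAddMonoidHom (α := ZMod (2 ^ (k + 1) * l)) 2).range := by
    ext s; simp [two_mul]
  rw [hT]
  exact ⟨hrf.not_monochromatic_of_compl_subset_coset hl hcov hAB hAC hBC hAne hBne hCne
      fun s hs t ht => ZMod.sub_mem_range_two_nsmul (iff_of_false hs ht),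
    hrf.not_monochromatic_of_compl_subset_coset hl hcov hAB hAC hBC hAne hBne hCne
      fun s hs t ht => ZMod.sub_mem_range_two_nsmul (iff_of_true (not_not.mp hs) (not_not.mp ht))⟩

theorem index_two_cosets_not_monochromatic (m l : ℕ) (hm : 1 ≤ m) (hl : Odd l)
    (hl1 : 1 < l) (n : ℕ) (hn : n = 2 ^ m * l)
    (A B C : Set (ZMod n))
    (hcover : A ∪ B ∪ C = Set.univ)
    (hAB : Disjoint A B) (hAC : Disjoint A C) (hBC : Disjoint B C)
    (hAne : A.Nonempty) (hBne : B.Nonempty) (hCne : C.Nonempty)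
    (hrf : RainbowFree A B C) :
    (¬ ((fun g : ZMod n => g + g) '' Set.univ ⊆ A ∨
        (fun g : ZMod n => g + g) '' Set.univ ⊆ B ∨
        (fun g : ZMod n => g + g) '' Set.univ ⊆ C)) ∧
    (¬ (((fun g : ZMod n => g + g) '' Set.univ)ᶜ ⊆ A ∨
        ((fun g : ZMod n => g + g) '' Set.univ)ᶜ ⊆ B ∨
        ((fun g : ZMod n => g + g) '' Set.univ)ᶜ ⊆ C)) :=
  index_two_cosets_not_monochromatic_general m l hm hl n hn A B C hcover hAB hAC hBC hAne hBne hCne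
    hrf
end

section
/- Let G be a finite abelian group of odd order n, with smallest prime factor of n in 𝒫₀ equal to p and smallest prime factor in 𝒫₁ equal to q, where 2p ≤ q. Choose a subgroup H of G of index p, a partition A ∪ B = H with |A| = ⌊n/(2p)⌋, and set C = G \ H. Then {A, B, C} is a rainbow-free 3-coloring of G whose smallest color class has size exactly ⌊n/(2p)⌋. -/
/-!
Since `H` has odd index, `2 • y ∈ H` forces `y ∈ H`; hence any two terms of a 3-term
progression `x + z = 2 • y` lying in `H` force the third into `H`. Every rainbow progression
for `{A, B, G \ H}` has exactly two terms in `A ∪ B = H`, so there is none. As `|H| = n / p`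
and `|G \ H| = (p - 1) |H| ≥ |H|`, the class `A` of size `⌊|H| / 2⌋` is the smallest one.
-/

open Pointwise

/-- `p ∈ 𝒫₀`: odd primes for which `2` has multiplicative order `p - 1`, or order
`(p-1)/2` with `(p-1)/2` odd. -/
def InP0 (p : ℕ) : Prop :=
  p.Prime ∧ Odd p ∧ (orderOf (2 : ZMod p) = p - 1 ∨
    (orderOf (2 : ZMod p) = (p - 1) / 2 ∧ Odd ((p - 1) / 2)))

/-- `p ∈ 𝒫₁`: the remaining odd primes. -/
def InP1 (p : ℕ) : Prop := p.Prime ∧ Odd p ∧ ¬ InP0 p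

namespace AddSubgroup

variable {G : Type*} [AddCommGroup G] (H : AddSubgroup G)

theorem mem_of_two_nsmul_mem_of_odd_index (hH : Odd H.index) {y : G} (hy : 2 • y ∈ H) :
    y ∈ H := by
  obtain ⟨k, hk⟩ := hH
  have hy' : y = H.index • y - k • 2 • y := by
    rw [smul_smul, hk, mul_comm k 2, add_nsmul, one_nsmul, add_sub_cancel_left]
  rw [hy']
  exact H.sub_mem (H.nsmul_index_mem y) (H.nsmul_mem hy k)

theorem rainbowFree_compl_of_odd_index (hH : Odd H.index) {A B : Set G}
    (hA : A ⊆ H) (hB : B ⊆ H) : RainbowFree A B (H : Set G)ᶜ := by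
  intro x y z hxyz hrainbow
  have hz : x ∈ H → y ∈ H → z ∈ H := fun hx hy => by
    rw [eq_sub_of_add_eq' hxyz]
    exact H.sub_mem (H.nsmul_mem hy 2) hx
  have hx : z ∈ H → y ∈ H → x ∈ H := fun hz hy => by
    rw [eq_sub_of_add_eq hxyz]
    exact H.sub_mem (H.nsmul_mem hy 2) hz
  have hy : x ∈ H → z ∈ H → y ∈ H := fun hx hz =>
    H.mem_of_two_nsmul_mem_of_odd_index hH (hxyz ▸ H.add_mem hx hz)
  rcases hrainbow with ⟨hx₁, hy₁, hz₁⟩ | ⟨hx₁, hy₁, hz₁⟩ | ⟨hx₁, hy₁, hz₁⟩ |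
    ⟨hx₁, hy₁, hz₁⟩ | ⟨hx₁, hy₁, hz₁⟩ | ⟨hx₁, hy₁, hz₁⟩
  · exact hz₁ (hz (hA hx₁) (hB hy₁))
  · exact hy₁ (hy (hA hx₁) (hB hz₁))
  · exact hz₁ (hz (hB hx₁) (hA hy₁))
  · exact hy₁ (hy (hB hx₁) (hA hz₁))
  · exact hx₁ (hx (hB hz₁) (hA hy₁))
  · exact hx₁ (hx (hA hz₁) (hB hy₁))

end AddSubgroup

theorem extremal_rainbowFree_coloring_general {G : Type*} [AddCommGroup G] [Fintype G]
    (p : ℕ)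
    (hp0 : InP0 p)
    (H : AddSubgroup G) (hHi : H.index = p)
    (A B C : Set G)
    (hAB : Disjoint A B) (hABH : A ∪ B = (H : Set G))
    (hC : C = Set.univ \ (H : Set G))
    (hAcard : A.ncard = Fintype.card G / (2 * p)) :
    RainbowFree A B C ∧
    min (min A.ncard B.ncard) C.ncard = Fintype.card G / (2 * p) := by
  rw [← Set.compl_eq_univ_sdiff] at hC
  subst hC
  refine ⟨H.rainbowFree_compl_of_odd_index (hHi ▸ hp0.2.1) (hABH ▸ Set.subset_union_left)
    (hABH ▸ Set.subset_union_right), ?_⟩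
  set h := Nat.card H
  have hG : Fintype.card G = p * h := by
    rw [← Nat.card_eq_fintype_card, ← H.index_mul_card, hHi]
  have hABcard : A.ncard + B.ncard = h := by
    rw [← Set.ncard_union_eq hAB, hABH]
    rfl
  have hCcard : (H : Set G)ᶜ.ncard = p * h - h := by
    rw [Set.ncard_compl, Nat.card_eq_fintype_card, hG]
    rfl
  have hhalf : Fintype.card G / (2 * p) = h / 2 := by
    rw [hG, mul_comm 2 p, Nat.mul_div_mul_left _ _ hp0.1.pos]
  have hCH : h ≤ p * h - h := by
    have := Nat.mul_le_mul_right h hp0.1.two_le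
    omega
  omega

theorem extremal_rainbowFree_coloring {G : Type*} [AddCommGroup G] [Fintype G]
    (hodd : Odd (Fintype.card G)) (p q : ℕ)
    (hp0 : InP0 p) (hpdvd : p ∣ Fintype.card G)
    (hpmin : ∀ r, InP0 r → r ∣ Fintype.card G → p ≤ r)
    (hq1 : InP1 q) (hqdvd : q ∣ Fintype.card G)
    (hqmin : ∀ r, InP1 r → r ∣ Fintype.card G → q ≤ r)
    (hpq : 2 * p ≤ q)
    (H : AddSubgroup G) (hHi : H.index = p)
    (A B C : Set G)
    (hAB : Disjoint A B) (hABH : A ∪ B = (H : Set G))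
    (hC : C = Set.univ \ (H : Set G))
    (hAcard : A.ncard = Fintype.card G / (2 * p)) :
    RainbowFree A B C ∧
    min (min A.ncard B.ncard) C.ncard = Fintype.card G / (2 * p) :=
  extremal_rainbowFree_coloring_general p hp0 H hHi A B C hAB hABH hC hAcard
end

section
/- Let G be an abelian group of odd order and {A, B, C} a rainbow-free 3-coloring with all classes nonempty. If |A| = 1, say A = {0} after translation, then for every x ∈ B both −x ∈ B and 2x ∈ B, and similarly for C; hence 2·B = B = −B and 2·C = C = −C. -/
/-!
With `A = {0}` and `x ∈ B`, the progressions `(-x, 0, x)` and `(0, x, 2x)` have a term in `A`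
and one in `B`, so their remaining terms `-x` and `2x` cannot lie in `C`; they are nonzero
(doubling is injective in odd order), hence lie in `B`. Doubling is then an injective self-map
of the finite set `B`, so it maps `B` onto itself. The same holds for `C` by symmetry.
-/

open Pointwise

open Function

namespace RainbowFree

variable {G : Type*} [AddCommGroup G] {A B C : Set G}

theorem swap_right (hrf : RainbowFree A B C) : RainbowFree A C B :=
  fun x y z hxz hrainbow => hrf x y z hxz (by tauto)

theorem neg_mem (hrf : RainbowFree {0} B C) (hcover : {0} ∪ B ∪ C = Set.univ)
    (h0B : (0 : G) ∉ B) {x : G} (hx : x ∈ B) : -x ∈ B := by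
  have hmem : -x ∈ {0} ∪ B ∪ C := hcover ▸ Set.mem_univ _
  rcases hmem with (hzero | hB) | hC
  · exact absurd (neg_eq_zero.mp hzero ▸ hx) h0B
  · exact hB
  · exact absurd (Or.inr <| Or.inr <| Or.inr <| Or.inr <| Or.inl ⟨hC, rfl, hx⟩)
      (hrf (-x) 0 x (by simp))

theorem two_nsmul_mem (hrf : RainbowFree {0} B C) (hcover : {0} ∪ B ∪ C = Set.univ)
    (h0B : (0 : G) ∉ B) (hdouble : Injective fun t : G => 2 • t) {x : G} (hx : x ∈ B) :
    2 • x ∈ B := by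
  have hmem : 2 • x ∈ {0} ∪ B ∪ C := hcover ▸ Set.mem_univ _
  rcases hmem with (hzero | hB) | hC
  · have hx0 : x = 0 := hdouble (by simpa using hzero)
    exact absurd (hx0 ▸ hx) h0B
  · exact hB
  · exact absurd (Or.inl ⟨rfl, hx, hC⟩) (hrf 0 x (2 • x) (zero_add _))

theorem neg_eq_self (hrf : RainbowFree {0} B C) (hcover : {0} ∪ B ∪ C = Set.univ)
    (h0B : (0 : G) ∉ B) : -B = B :=
  Set.neg_eq_self_iff_neg_subset.mpr fun x hx => by simpa using hrf.neg_mem hcover h0B hx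

theorem image_two_nsmul_eq [Finite G] (hrf : RainbowFree {0} B C)
    (hcover : {0} ∪ B ∪ C = Set.univ) (h0B : (0 : G) ∉ B)
    (hdouble : Injective fun t : G => 2 • t) : (fun t : G => 2 • t) '' B = B :=
  ((B.toFinite.injOn_iff_bijOn_of_mapsTo fun _ hx =>
    hrf.two_nsmul_mem hcover h0B hdouble hx).mp hdouble.injOn).image_eq

end RainbowFree

theorem singleton_class_closure_general {G : Type*} [AddCommGroup G] [Fintype G]
    (hodd : Odd (Fintype.card G)) (A B C : Set G)
    (hcover : A ∪ B ∪ C = Set.univ)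
    (hAB : Disjoint A B) (hAC : Disjoint A C)
    (hrf : RainbowFree A B C) (hA : A = {0}) :
    (∀ x ∈ B, -x ∈ B ∧ x + x ∈ B) ∧ (∀ x ∈ C, -x ∈ C ∧ x + x ∈ C) ∧
    (fun t : G => 2 • t) '' B = B ∧ -B = B ∧
    (fun t : G => 2 • t) '' C = C ∧ -C = C := by
  subst hA
  have h0B : (0 : G) ∉ B := Set.disjoint_singleton_left.mp hAB
  have h0C : (0 : G) ∉ C := Set.disjoint_singleton_left.mp hAC
  have hcover' : {0} ∪ C ∪ B = Set.univ := by rwa [Set.union_right_comm]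
  have hrf' := hrf.swap_right
  have hdouble : Injective fun t : G => 2 • t :=
    (Nat.Coprime.nsmul_right_bijective
      (by simpa [Nat.card_eq_fintype_card] using hodd)).injective
  simp only [← two_nsmul]
  exact ⟨fun x hx => ⟨hrf.neg_mem hcover h0B hx, hrf.two_nsmul_mem hcover h0B hdouble hx⟩,
    fun x hx => ⟨hrf'.neg_mem hcover' h0C hx, hrf'.two_nsmul_mem hcover' h0C hdouble hx⟩,
    hrf.image_two_nsmul_eq hcover h0B hdouble, hrf.neg_eq_self hcover h0B,
    hrf'.image_two_nsmul_eq hcover' h0C hdouble, hrf'.neg_eq_self hcover' h0C⟩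

theorem singleton_class_closure {G : Type*} [AddCommGroup G] [Fintype G]
    (hodd : Odd (Fintype.card G)) (A B C : Set G)
    (hcover : A ∪ B ∪ C = Set.univ)
    (hAB : Disjoint A B) (hAC : Disjoint A C) (hBC : Disjoint B C)
    (hBne : B.Nonempty) (hCne : C.Nonempty)
    (hrf : RainbowFree A B C) (hA : A = {0}) :
    (∀ x ∈ B, -x ∈ B ∧ x + x ∈ B) ∧ (∀ x ∈ C, -x ∈ C ∧ x + x ∈ C) ∧
    (fun t : G => 2 • t) '' B = B ∧ -B = B ∧
    (fun t : G => 2 • t) '' C = C ∧ -C = C :=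
  singleton_class_closure_general hodd A B C hcover hAB hAC hrf hA
end
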